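/- arXiv:0710.2898 — 2 statements merged into one kernel-verified Lean document; each statement's English description precedes it below -/
import Mathlib

section
/- Let ℋ be a complex Hilbert space, let 1 ≤ r < k < ∞ with k ≤ dim ℋ, let A ∈ B(ℋ), and let F ∈ B(ℋ) be an operator of rank at most r. Then Λ_k(A) ⊆ Λ_{k−r}(A + F). Consequently, Λ_k(A) ⊆ ⋂{Λ_{k−r}(A + F) : F ∈ B(ℋ), rank(F) ≤ r}. -/
noncomputable section

open scoped InnerProductSpace
open Complex

variable {H : Type*} [NormedAddCommGroup H] [InnerProductSpace ℂ H] [CompleteSpace H]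

/-- `P` is an orthogonal projection: self-adjoint and idempotent. -/
def IsOrthProj (P : H →L[ℂ] H) : Prop :=
  IsSelfAdjoint P ∧ P ∘L P = P

/-- The rank of a bounded operator, as a cardinal. -/
def opRank (F : H →L[ℂ] H) : Cardinal :=
  Module.rank ℂ (LinearMap.range (F : H →ₗ[ℂ] H))

/-- The rank-`k` numerical range `Λ_k(A)`. -/
def rankKRange (k : ℕ) (A : H →L[ℂ] H) : Set ℂ :=
  { lam | ∃ P : H →L[ℂ] H, IsOrthProj P ∧ opRank P = k ∧ P ∘L A ∘L P = lam • P }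

/-- The classical numerical range `W(A)`. -/
def numRange (A : H →L[ℂ] H) : Set ℂ :=
  { z | ∃ x : H, ‖x‖ = 1 ∧ ⟪x, A x⟫_ℂ = z }

/-- `λ_k(T)`: the supremum over `k`-dimensional compressions of the `k`-th largest
eigenvalue of the compression (Courant–Fischer form: sup over `k`-dimensional
subspaces of the infimum of the Rayleigh quotient). -/
def lambdaSA (k : ℕ) (T : H →L[ℂ] H) : ℝ :=
  sSup { t : ℝ | ∃ V : Submodule ℂ H, Module.finrank ℂ V = k ∧
    ∀ x ∈ V, ‖x‖ = 1 → t ≤ (⟪x, T x⟫_ℂ).re }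

/-- The real part `(T + T*)/2` of an operator. -/
def reOp (T : H →L[ℂ] H) : H →L[ℂ] H :=
  (2 : ℂ)⁻¹ • (T + ContinuousLinearMap.adjoint T)

/-- The set `Ω_k(A)`. -/
def omegaK (k : ℕ) (A : H →L[ℂ] H) : Set ℂ :=
  { μ | ∀ ξ ∈ Set.Ico (0 : ℝ) (2 * Real.pi),
      (Complex.exp (ξ * Complex.I) * μ).re ≤ lambdaSA k (reOp (Complex.exp (ξ * Complex.I) • A)) }

/-! If `P A P = λ P` with `P` the projection onto a `k`-dimensional subspace `K`, then
`K ∩ ker F` has dimension at least `k - r`. For the projection `Q` onto a `(k - r)`-dimensional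
subspace of it, `F Q = 0` and `Q P = P Q = Q`, so `Q (A + F) Q = Q P A P Q = λ Q`. -/

namespace Submodule

section DivisionRing

variable {K M N : Type*} [DivisionRing K] [AddCommGroup M] [Module K M] [AddCommGroup N]
  [Module K N]

theorem exists_le_finrank_eq (U : Submodule K M) [FiniteDimensional K U] {n : ℕ}
    (hn : n ≤ Module.finrank K U) : ∃ W ≤ U, Module.finrank K W = n := by
  obtain ⟨v, hv⟩ := exists_linearIndependent_of_le_finrank hn
  refine ⟨span K (Set.range (U.subtype ∘ v)), span_le.mpr ?_, ?_⟩
  · rintro _ ⟨i, rfl⟩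
    exact (v i).2
  · rw [finrank_span_eq_card (hv.map' U.subtype U.ker_subtype), Fintype.card_fin]

theorem finrank_sub_le_finrank_inf_ker (V : Submodule K M) [FiniteDimensional K V]
    (f : M →ₗ[K] N) {r : ℕ} (hf : Module.rank K (LinearMap.range f) ≤ r) :
    Module.finrank K V - r ≤ Module.finrank K ↥(V ⊓ LinearMap.ker f) := by
  have hrange : Module.finrank K (LinearMap.range (f ∘ₗ V.subtype)) ≤ r := by
    have h := (Submodule.rank_mono (LinearMap.range_comp_le_range V.subtype f)).trans hf
    rwa [← Module.finrank_eq_rank, Nat.cast_le] at h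
  have hker : LinearMap.ker (f ∘ₗ V.subtype) = comap V.subtype (LinearMap.ker f) :=
    LinearMap.ker_comp _ _
  have hinf : V ⊓ LinearMap.ker f = map V.subtype (comap V.subtype (LinearMap.ker f)) :=
    (map_comap_subtype V _).symm
  have := LinearMap.finrank_range_add_finrank_ker (f ∘ₗ V.subtype)
  rw [hinf, finrank_map_subtype_eq, ← hker]
  omega

end DivisionRing

section InnerProductSpace

variable {𝕜 E : Type*} [RCLike 𝕜] [NormedAddCommGroup E] [InnerProductSpace 𝕜 E]
  {U V : Submodule 𝕜 E} [U.HasOrthogonalProjection] [V.HasOrthogonalProjection]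

theorem starProjection_comp_starProjection_of_ge (h : U ≤ V) :
    V.starProjection ∘L U.starProjection = U.starProjection :=
  ContinuousLinearMap.ext fun x => starProjection_eq_self_iff.mpr (h (U.starProjection_apply_mem x))

theorem starProjection_comp_comp_starProjection_eq_smul_of_le (h : U ≤ V) {T : E →L[𝕜] E} {c : 𝕜}
    (hT : V.starProjection ∘L T ∘L V.starProjection = c • V.starProjection) :
    U.starProjection ∘L T ∘L U.starProjection = c • U.starProjection := by
  have hUV := starProjection_comp_starProjection_of_le h
  have hVU := starProjection_comp_starProjection_of_ge h
  calc U.starProjection ∘L T ∘L U.starProjection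
      = (U.starProjection ∘L V.starProjection) ∘L T ∘L V.starProjection ∘L U.starProjection := by
        rw [hUV, hVU]
    _ = U.starProjection ∘L (V.starProjection ∘L T ∘L V.starProjection) ∘L U.starProjection := by
        simp only [ContinuousLinearMap.comp_assoc]
    _ = c • U.starProjection := by
        rw [hT, ContinuousLinearMap.smul_comp, ContinuousLinearMap.comp_smul, hVU,
          starProjection_comp_starProjection_of_le le_rfl]

end InnerProductSpace

end Submodule

theorem IsOrthProj.starProjection (K : Submodule ℂ H) [K.HasOrthogonalProjection] :
    IsOrthProj K.starProjection :=
  ⟨isSelfAdjoint_starProjection K, K.isIdempotentElem_starProjection⟩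

theorem opRank_starProjection {E : Type*} [NormedAddCommGroup E] [InnerProductSpace ℂ E]
    (K : Submodule ℂ E) [K.HasOrthogonalProjection] :
    opRank K.starProjection = Module.rank ℂ K := by
  rw [opRank, K.range_starProjection]

theorem mem_rankKRange_iff {k : ℕ} {A : H →L[ℂ] H} {lam : ℂ} :
    lam ∈ rankKRange k A ↔ ∃ (K : Submodule ℂ H) (_ : K.HasOrthogonalProjection),
      Module.rank ℂ K = k ∧ K.starProjection ∘L A ∘L K.starProjection = lam • K.starProjection := by
  constructor
  · rintro ⟨P, ⟨hPsa, hPidem⟩, hPrank, hPAP⟩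
    obtain ⟨_, hP⟩ := isStarProjection_iff_eq_starProjection_range.mp ⟨hPidem, hPsa⟩
    refine ⟨LinearMap.range P, ‹_›, ?_, ?_⟩
    · rwa [← opRank_starProjection, ← hP]
    · rwa [← hP]
  · rintro ⟨K, _, hK, hKA⟩
    exact ⟨K.starProjection, .starProjection K, (opRank_starProjection K).trans hK, hKA⟩

theorem rankKRange_subset_rankKRange_add {r k : ℕ} (A : H →L[ℂ] H) {F : H →L[ℂ] H}
    (hF : opRank F ≤ r) : rankKRange k A ⊆ rankKRange (k - r) (A + F) := by
  intro lam hlam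
  obtain ⟨K, _, hK, hKA⟩ := mem_rankKRange_iff.mp hlam
  have : FiniteDimensional ℂ K := Module.finite_of_rank_eq_nat hK
  obtain ⟨W, hW, hWdim⟩ := (K ⊓ LinearMap.ker (F : H →ₗ[ℂ] H)).exists_le_finrank_eq
    (K.finrank_sub_le_finrank_inf_ker _ hF)
  rw [Module.finrank_eq_of_rank_eq hK] at hWdim
  have : FiniteDimensional ℂ W := Submodule.finiteDimensional_of_le (hW.trans inf_le_left)
  have hFW : F ∘L W.starProjection = 0 :=
    ContinuousLinearMap.ext fun x => (hW (W.starProjection_apply_mem x)).2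
  refine mem_rankKRange_iff.mpr ⟨W, inferInstance, by rw [← Module.finrank_eq_rank, hWdim], ?_⟩
  rw [ContinuousLinearMap.add_comp, hFW, add_zero]
  exact Submodule.starProjection_comp_comp_starProjection_eq_smul_of_le (hW.trans inf_le_left) hKA

theorem rankKRange_subset_perturbed_general
    (r k : ℕ) (A : H →L[ℂ] H) :
    (∀ F : H →L[ℂ] H, opRank F ≤ r →
      rankKRange k A ⊆ rankKRange (k - r) (A + F)) ∧
    rankKRange k A ⊆
      ⋂ F ∈ {F : H →L[ℂ] H | opRank F ≤ r}, rankKRange (k - r) (A + F) :=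
  ⟨fun _ hF => rankKRange_subset_rankKRange_add A hF,
    Set.subset_iInter₂ fun _ hF => rankKRange_subset_rankKRange_add A hF⟩

/-- Low rank perturbation: if `1 ≤ r < k ≤ dim ℋ` and `rank F ≤ r`, then
`Λ_k(A) ⊆ Λ_{k-r}(A+F)`; consequently `Λ_k(A)` is contained in the intersection of
`Λ_{k-r}(A+F)` over all operators `F` of rank at most `r`. -/
theorem rankKRange_subset_perturbed
    (r k : ℕ) (hr : 1 ≤ r) (hrk : r < k) (hk : (k : Cardinal) ≤ Module.rank ℂ H)
    (A : H →L[ℂ] H) :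
    (∀ F : H →L[ℂ] H, opRank F ≤ r →
      rankKRange k A ⊆ rankKRange (k - r) (A + F)) ∧
    rankKRange k A ⊆
      ⋂ F ∈ {F : H →L[ℂ] H | opRank F ≤ r}, rankKRange (k - r) (A + F) :=
  rankKRange_subset_perturbed_general r k A
end
end

section
/- Let ℋ be a complex Hilbert space, A ∈ B(ℋ), and 1 ≤ r < k < ∞ with k ≤ dim ℋ. Let 𝒮 be any subset of F_r containing the set 𝒮₀ = {2e^{iξ}‖A‖P : P ∈ P_r, ξ ∈ [0,2π)}. Then Ω_k(A) = ⋂{Ω_{k−r}(A + F) : F ∈ 𝒮}. -/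
/-!
The number `λ_k(B)` only sees the quadratic form `x ↦ Re ⟪x, B x⟫`, which is the same for `B`
and `Re B`.

`⊆`: a `k`-dimensional subspace on which the form of `e^{iξ}A` is `≥ t` meets `ker F` in a
subspace of dimension `≥ k - r`, on which the forms of `e^{iξ}A` and `e^{iξ}(A + F)` agree.

`⊇`: suppose `λ_k(T) < t' < Re (e^{iξ}μ)` with `T = Re (e^{iξ}A)`. The range `G` of the positive
part `(T - t')⁺` is `T`-invariant, has dimension `< k`, and the form of `T` is `≤ t'` on `Gᗮ`.
Take a rank-`r` subspace `U` comparable with `G` and choose the phase `ξ'` with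
`e^{iξ} e^{iξ'} = -1`, so that `F = 2e^{iξ'}‖A‖P_U ∈ 𝒮₀` turns `e^{iξ}(A + F)` into
`e^{iξ}A - 2‖A‖P_U`. A unit vector `x ⊥ Uᗮ ⊓ G` has `P_G x ∈ U`, so `‖P_G x‖ ≤ ‖P_U x‖` and
`Re ⟪x, (T - 2‖A‖P_U) x⟫ ≤ ‖A‖‖P_G x‖² + t'‖P_{Gᗮ} x‖² - 2‖A‖‖P_G x‖² ≤ max t' (-‖A‖)`.
Since `dim (Uᗮ ⊓ G) = dim G - r < k - r`, every `(k - r)`-dimensional subspace contains such an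
`x`, hence `λ_{k-r}(e^{iξ}(A + F)) < Re (e^{iξ}μ)`, contradicting `μ ∈ Ω_{k-r}(A + F)`.
-/

noncomputable section

open scoped InnerProductSpace
open Complex

variable {H : Type*} [NormedAddCommGroup H] [InnerProductSpace ℂ H] [CompleteSpace H]

open Module (finrank)

theorem Submodule.exists_le_finrank_eq_s2 {K M : Type*} [DivisionRing K] [AddCommGroup M]
    [Module K M] (W : Submodule K M) {n : ℕ} (hn : (n : Cardinal) ≤ Module.rank K W) :
    ∃ V ≤ W, FiniteDimensional K V ∧ finrank K V = n := by
  obtain ⟨f, hf⟩ := exists_linearIndependent_of_le_rank hn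
  have hf' : LinearIndependent K (W.subtype ∘ f) := hf.map' W.subtype W.ker_subtype
  refine ⟨Submodule.span K (Set.range (W.subtype ∘ f)), ?_,
    FiniteDimensional.span_of_finite K (Set.finite_range _), ?_⟩
  · rw [Submodule.span_le]
    rintro - ⟨i, rfl⟩
    exact (f i).2
  · rw [finrank_span_eq_card hf', Fintype.card_fin]

section InnerProductSpace

variable {𝕜 E : Type*} [RCLike 𝕜] [NormedAddCommGroup E] [InnerProductSpace 𝕜 E]

namespace Submodule

theorem exists_norm_eq_one_mem {V : Submodule 𝕜 E} (hV : V ≠ ⊥) : ∃ x ∈ V, ‖x‖ = 1 := by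
  obtain ⟨v, hvV, hv0⟩ := V.exists_mem_ne_zero_of_ne_bot hV
  exact ⟨(‖v‖⁻¹ : 𝕜) • v, V.smul_mem _ hvV, norm_smul_inv_norm hv0⟩

theorem inf_orthogonal_ne_bot_of_finrank_lt {V Z : Submodule 𝕜 E} [FiniteDimensional 𝕜 V]
    [FiniteDimensional 𝕜 Z] (h : finrank 𝕜 Z < finrank 𝕜 V) : V ⊓ Zᗮ ≠ ⊥ := by
  obtain ⟨v, hv, hv0⟩ := Submodule.exists_mem_ne_zero_of_ne_bot
    (LinearMap.ker_ne_bot_of_finrank_lt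
      (f := (Z.orthogonalProjectionOnto : E →ₗ[𝕜] Z) ∘ₗ V.subtype) h)
  refine fun hbot => hv0 (Subtype.ext ?_)
  exact (mem_bot 𝕜).mp (hbot ▸ ⟨v.2, orthogonalProjectionOnto_eq_zero_iff.mp hv⟩)

theorem exists_le_le_finrank_eq {N W : Submodule 𝕜 E} [FiniteDimensional 𝕜 W] (hNW : N ≤ W)
    {n : ℕ} (hN : finrank 𝕜 N ≤ n) (hW : n ≤ finrank 𝕜 W) :
    ∃ U, N ≤ U ∧ U ≤ W ∧ finrank 𝕜 U = n := by
  have := finiteDimensional_of_le hNW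
  have hdim := finrank_add_inf_finrank_orthogonal hNW
  obtain ⟨X, hX, _, hXn⟩ := (Nᗮ ⊓ W).exists_le_finrank_eq_s2 (n := n - finrank 𝕜 N)
    (by rw [← Module.finrank_eq_rank]; exact_mod_cast (by omega))
  have hNX : N ⊓ X = ⊥ :=
    eq_bot_iff.2 ((inf_le_inf_left N (hX.trans inf_le_left)).trans N.inf_orthogonal_eq_bot.le)
  have := finrank_sup_add_finrank_inf_eq N X
  rw [hNX, finrank_bot] at this
  exact ⟨N ⊔ X, le_sup_left, sup_le hNW (hX.trans inf_le_right), by omega⟩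

theorem exists_finrank_eq_and_comparable (G : Submodule 𝕜 E) [FiniteDimensional 𝕜 G] {r : ℕ}
    (hr : (r : Cardinal) ≤ Module.rank 𝕜 E) :
    ∃ U : Submodule 𝕜 E, FiniteDimensional 𝕜 U ∧ finrank 𝕜 U = r ∧ (U ≤ G ∨ G ≤ U) := by
  rcases le_total r (finrank 𝕜 G) with hrG | hGr
  · obtain ⟨U, hUG, hU, hUr⟩ := G.exists_le_finrank_eq_s2 (n := r)
      (by rw [← Module.finrank_eq_rank]; exact_mod_cast hrG)
    exact ⟨U, hU, hUr, .inl hUG⟩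
  · obtain ⟨F, -, _, hFr⟩ := (⊤ : Submodule 𝕜 E).exists_le_finrank_eq_s2 (n := r)
      (by rwa [rank_top])
    obtain ⟨U, hGU, hUW, hUr⟩ := exists_le_le_finrank_eq (le_sup_left : G ≤ G ⊔ F) hGr
      (hFr ▸ finrank_mono le_sup_right)
    exact ⟨U, finiteDimensional_of_le hUW, hUr, .inr hGU⟩

theorem finrank_orthogonal_inf_eq_sub {G U : Submodule 𝕜 E} [FiniteDimensional 𝕜 G]
    [FiniteDimensional 𝕜 U] (hUG : U ≤ G ∨ G ≤ U) :
    finrank 𝕜 ↥(Uᗮ ⊓ G) = finrank 𝕜 G - finrank 𝕜 U := by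
  rcases hUG with hUG | hGU
  · have := finrank_add_inf_finrank_orthogonal hUG
    omega
  · have hbot : Uᗮ ⊓ G = ⊥ :=
      eq_bot_iff.2 ((inf_le_inf_left _ hGU).trans (inf_comm U Uᗮ ▸ U.inf_orthogonal_eq_bot).le)
    rw [hbot, finrank_bot, Nat.sub_eq_zero_of_le (finrank_mono hGU)]

theorem starProjection_mem_of_mem_orthogonal {G U : Submodule 𝕜 E} [G.HasOrthogonalProjection]
    [U.HasOrthogonalProjection] (hUG : U ≤ G ∨ G ≤ U) {x : E} (hx : x ∈ (Uᗮ ⊓ G)ᗮ) :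
    G.starProjection x ∈ U := by
  rcases hUG with hUG | hGU
  · rw [← U.orthogonal_orthogonal]
    intro y hy
    have hPy : G.starProjection y ∈ Uᗮ ⊓ G := by
      refine ⟨fun u hu => ?_, G.starProjection_apply_mem y⟩
      rw [← inner_starProjection_left_eq_right, starProjection_eq_self_iff.mpr (hUG hu)]
      exact hy u hu
    rw [← inner_starProjection_left_eq_right]
    exact hx _ hPy
  · exact hGU (G.starProjection_apply_mem x)

theorem norm_starProjection_le_of_starProjection_mem {G U : Submodule 𝕜 E}
    [G.HasOrthogonalProjection] [U.HasOrthogonalProjection] {x : E}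
    (h : G.starProjection x ∈ U) : ‖G.starProjection x‖ ≤ ‖U.starProjection x‖ := by
  set u := G.starProjection x
  have hu : ⟪u, u⟫_𝕜 = ⟪u, U.starProjection x⟫_𝕜 :=
    calc ⟪u, u⟫_𝕜 = ⟪G.starProjection u, x⟫_𝕜 := (G.inner_starProjection_left_eq_right u x).symm
      _ = ⟪U.starProjection u, x⟫_𝕜 := by
        rw [starProjection_eq_self_iff.mpr h,
          starProjection_eq_self_iff.mpr (G.starProjection_apply_mem x)]
      _ = ⟪u, U.starProjection x⟫_𝕜 := U.inner_starProjection_left_eq_right u x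
  have hCS : ‖u‖ ^ 2 ≤ ‖u‖ * ‖U.starProjection x‖ := by
    calc ‖u‖ ^ 2 = ‖⟪u, u⟫_𝕜‖ := by simp [inner_self_eq_norm_sq_to_K]
      _ ≤ ‖u‖ * ‖U.starProjection x‖ := hu ▸ norm_inner_le_norm _ _
  nlinarith [norm_nonneg u, norm_nonneg (U.starProjection x)]

end Submodule

theorem ContinuousLinearMap.abs_re_inner_map_self_le (T : E →L[𝕜] E) (x : E) :
    |RCLike.re ⟪x, T x⟫_𝕜| ≤ ‖T‖ * ‖x‖ ^ 2 :=
  calc |RCLike.re ⟪x, T x⟫_𝕜| ≤ ‖⟪x, T x⟫_𝕜‖ := RCLike.abs_re_le_norm _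
    _ ≤ ‖x‖ * ‖T x‖ := norm_inner_le_norm _ _
    _ ≤ ‖x‖ * (‖T‖ * ‖x‖) := by gcongr; exact T.le_opNorm x
    _ = ‖T‖ * ‖x‖ ^ 2 := by ring

theorem LinearMap.IsSymmetric.inner_map_self_eq_add_of_mapsTo {T : E →ₗ[𝕜] E}
    (hT : T.IsSymmetric) {G : Submodule 𝕜 E} [G.HasOrthogonalProjection]
    (hGT : ∀ x ∈ G, T x ∈ G) (x : E) :
    ⟪x, T x⟫_𝕜 = ⟪G.starProjection x, T (G.starProjection x)⟫_𝕜
      + ⟪Gᗮ.starProjection x, T (Gᗮ.starProjection x)⟫_𝕜 := by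
  set u := G.starProjection x
  set w := Gᗮ.starProjection x
  have hu : T u ∈ G := hGT u (G.starProjection_apply_mem x)
  have hw : w ∈ Gᗮ := Gᗮ.starProjection_apply_mem x
  have huw : ⟪u, T w⟫_𝕜 = 0 := by rw [← hT]; exact Submodule.inner_right_of_mem_orthogonal hu hw
  have hwu : ⟪w, T u⟫_𝕜 = 0 := Submodule.inner_left_of_mem_orthogonal hu hw
  conv_lhs => rw [← G.starProjection_add_starProjection_orthogonal x]
  rw [map_add, inner_add_left, inner_add_right, inner_add_right, huw, hwu]
  ring

theorem re_inner_sub_smul_starProjection_apply_le {T : E →L[𝕜] E}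
    (hT : (T : E →ₗ[𝕜] E).IsSymmetric) {a t : ℝ} (hTa : ‖T‖ ≤ a)
    {G U : Submodule 𝕜 E} [G.HasOrthogonalProjection] [U.HasOrthogonalProjection]
    (hGT : ∀ x ∈ G, T x ∈ G) (hGt : ∀ w ∈ Gᗮ, RCLike.re ⟪w, T w⟫_𝕜 ≤ t * ‖w‖ ^ 2)
    {x : E} (hx : ‖x‖ = 1) (hxU : G.starProjection x ∈ U) :
    RCLike.re ⟪x, (T - ((2 * a : ℝ) : 𝕜) • U.starProjection) x⟫_𝕜 ≤ max t (-a) := by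
  have ha : 0 ≤ a := (norm_nonneg T).trans hTa
  have hsplit := congrArg RCLike.re (hT.inner_map_self_eq_add_of_mapsTo hGT x)
  simp only [map_add, ContinuousLinearMap.coe_coe] at hsplit
  have hu := (abs_le.mp ((T.abs_re_inner_map_self_le (G.starProjection x)))).2
  have hw := hGt _ (Gᗮ.starProjection_apply_mem x)
  have hPU : RCLike.re ⟪x, U.starProjection x⟫_𝕜 = ‖U.starProjection x‖ ^ 2 := by
    rw [← inner_self_eq_norm_sq (𝕜 := 𝕜), U.inner_starProjection_left_eq_right,
      Submodule.starProjection_eq_self_iff.mpr (U.starProjection_apply_mem x)]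
  have hpyth := G.norm_sq_eq_add_norm_sq_starProjection x
  have hle := Submodule.norm_starProjection_le_of_starProjection_mem hxU
  rw [hx] at hpyth
  simp only [sub_apply, smul_apply, inner_sub_right, inner_smul_right, map_sub,
    RCLike.re_ofReal_mul, hPU]
  have hTu := mul_le_mul_of_nonneg_right hTa (sq_nonneg ‖G.starProjection x‖)
  have hUu := mul_le_mul_of_nonneg_left
    (pow_le_pow_left₀ (norm_nonneg _) hle 2) ha
  nlinarith [le_max_left t (-a), le_max_right t (-a), sq_nonneg ‖G.starProjection x‖,
    sq_nonneg ‖Gᗮ.starProjection x‖]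

end InnerProductSpace

section

variable {E : Type*} [NormedAddCommGroup E] [InnerProductSpace ℂ E]

theorem le_lambdaSA {k : ℕ} (hk : 0 < k) {T : E →L[ℂ] E} {t : ℝ} (V : Submodule ℂ E)
    (hV : finrank ℂ V = k) (hVt : ∀ x ∈ V, ‖x‖ = 1 → t ≤ (⟪x, T x⟫_ℂ).re) :
    t ≤ lambdaSA k T := by
  refine le_csSup ⟨‖T‖, ?_⟩ ⟨V, hV, hVt⟩
  rintro s ⟨W, hW, hWs⟩
  obtain ⟨x, hxW, hx⟩ := W.exists_norm_eq_one_mem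
    (Submodule.nontrivial_iff_ne_bot.mp (Module.nontrivial_of_finrank_pos (hW ▸ hk)))
  simpa [hx] using (hWs x hxW hx).trans (abs_le.mp (T.abs_re_inner_map_self_le x)).2

theorem lambdaSA_le_of_forall {k : ℕ} (hk : (k : Cardinal) ≤ Module.rank ℂ E) {T : E →L[ℂ] E}
    {b : ℝ} (h : ∀ (t : ℝ) (V : Submodule ℂ E), finrank ℂ V = k →
      (∀ x ∈ V, ‖x‖ = 1 → t ≤ (⟪x, T x⟫_ℂ).re) → t ≤ b) :
    lambdaSA k T ≤ b := by
  obtain ⟨V, -, -, hV⟩ := (⊤ : Submodule ℂ E).exists_le_finrank_eq_s2 (n := k) (by rwa [rank_top])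
  refine csSup_le ⟨-‖T‖, V, hV, fun x _ hx => ?_⟩ fun t ⟨V, hV, hVt⟩ => h t V hV hVt
  simpa [hx] using (abs_le.mp (T.abs_re_inner_map_self_le x)).1

theorem lambdaSA_le {k : ℕ} (hk : (k : Cardinal) ≤ Module.rank ℂ E)
    {T : E →L[ℂ] E} {b : ℝ}
    (h : ∀ V : Submodule ℂ E, finrank ℂ V = k → ∃ x ∈ V, ‖x‖ = 1 ∧ (⟪x, T x⟫_ℂ).re ≤ b) :
    lambdaSA k T ≤ b :=
  lambdaSA_le_of_forall hk fun _ V hV hVt =>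
    let ⟨x, hxV, hx, hxb⟩ := h V hV
    (hVt x hxV hx).trans hxb

theorem neg_norm_le_lambdaSA {k : ℕ} (hk0 : 0 < k) (hk : (k : Cardinal) ≤ Module.rank ℂ E)
    (T : E →L[ℂ] E) : -‖T‖ ≤ lambdaSA k T := by
  obtain ⟨V, -, -, hV⟩ := (⊤ : Submodule ℂ E).exists_le_finrank_eq_s2 (n := k) (by rwa [rank_top])
  refine le_lambdaSA hk0 V hV fun x _ hx => ?_
  simpa [hx] using (abs_le.mp (T.abs_re_inner_map_self_le x)).1

theorem lambdaSA_congr {k : ℕ} {T T' : E →L[ℂ] E}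
    (h : ∀ x, (⟪x, T x⟫_ℂ).re = (⟪x, T' x⟫_ℂ).re) : lambdaSA k T = lambdaSA k T' := by
  simp only [lambdaSA, h]

theorem opRank_smul_le (c : ℂ) (F : E →L[ℂ] E) : opRank (c • F) ≤ opRank F :=
  Submodule.rank_mono (LinearMap.range_smul_le_range (F : E →ₗ[ℂ] E) c)

theorem opRank_starProjection_s2 (U : Submodule ℂ E) [FiniteDimensional ℂ U] :
    opRank U.starProjection = finrank ℂ U := by
  rw [opRank, Submodule.range_starProjection, Module.finrank_eq_rank]

theorem Submodule.exists_le_finrank_eq_sub_of_opRank_le (V : Submodule ℂ E)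
    [FiniteDimensional ℂ V] {F : E →L[ℂ] E} {r : ℕ} (hF : opRank F ≤ r) :
    ∃ W ≤ V, finrank ℂ W = finrank ℂ V - r ∧ ∀ x ∈ W, F x = 0 := by
  let φ := (F : E →ₗ[ℂ] E).domRestrict V
  have hφ : finrank ℂ (LinearMap.range φ) ≤ r := by
    have := (Submodule.rank_mono (LinearMap.range_domRestrict_le_range _ V)).trans hF
    rw [← Module.finrank_eq_rank] at this
    exact_mod_cast this
  have hker := φ.finrank_range_add_finrank_ker
  obtain ⟨W, hW, -, hWr⟩ := ((LinearMap.ker φ).map V.subtype).exists_le_finrank_eq_s2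
    (n := finrank ℂ V - r) (by
      rw [← Module.finrank_eq_rank, Submodule.finrank_map_subtype_eq]
      exact_mod_cast (by omega))
  refine ⟨W, hW.trans (Submodule.map_subtype_le _ _), hWr, fun x hx => ?_⟩
  obtain ⟨v, hv, rfl⟩ := hW hx
  exact hv

theorem lambdaSA_le_lambdaSA_add {r k : ℕ} (hrk : r < k) (hk : (k : Cardinal) ≤ Module.rank ℂ E)
    (T : E →L[ℂ] E) {F : E →L[ℂ] E} (hF : opRank F ≤ r) :
    lambdaSA k T ≤ lambdaSA (k - r) (T + F) := by
  refine lambdaSA_le_of_forall hk fun t V hV hVt => ?_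
  have : FiniteDimensional ℂ V := .of_finrank_pos (by omega)
  obtain ⟨W, hWV, hWr, hWF⟩ := V.exists_le_finrank_eq_sub_of_opRank_le hF
  refine le_lambdaSA (by omega) W (hV ▸ hWr) fun x hx hx1 => ?_
  simpa [hWF x hx] using hVt x (hWV hx) hx1

end

theorem re_inner_reOp_apply (B : H →L[ℂ] H) (x : H) :
    (⟪x, reOp B x⟫_ℂ).re = (⟪x, B x⟫_ℂ).re := by
  simp only [reOp, smul_apply, add_apply, inner_smul_right, inner_add_right,
    ContinuousLinearMap.adjoint_inner_right]
  rw [← inner_conj_symm (B x) x, Complex.add_conj]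
  simp

theorem reOp_eq_realPart (B : H →L[ℂ] H) : reOp B = realPart B := by
  rw [realPart_apply_coe, reOp, ContinuousLinearMap.star_eq_adjoint, ← Complex.coe_smul]
  norm_num

theorem isSelfAdjoint_reOp (B : H →L[ℂ] H) : IsSelfAdjoint (reOp B) :=
  reOp_eq_realPart B ▸ (realPart B).2

theorem norm_reOp_le (B : H →L[ℂ] H) : ‖reOp B‖ ≤ ‖B‖ :=
  reOp_eq_realPart B ▸ realPart.norm_le B

theorem lambdaSA_reOp (k : ℕ) (B : H →L[ℂ] H) : lambdaSA k (reOp B) = lambdaSA k B :=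
  lambdaSA_congr (re_inner_reOp_apply B)

theorem isOrthProj_starProjection (U : Submodule ℂ H) [U.HasOrthogonalProjection] :
    IsOrthProj U.starProjection :=
  ⟨isSelfAdjoint_starProjection U, U.isIdempotentElem_starProjection⟩

theorem IsSelfAdjoint.apply_posPart_apply {S : H →L[ℂ] H} (hS : IsSelfAdjoint S) (y : H) :
    S (S⁺ y) = S⁺ (S⁺ y) := by
  calc S (S⁺ y) = (S⁺ - S⁻) (S⁺ y) := by rw [CFC.posPart_sub_negPart S hS]
    _ = S⁺ (S⁺ y) := by
      rw [sub_apply, ← mul_apply_eq_comp S⁻, CFC.negPart_mul_posPart, zero_apply,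
        sub_zero]

theorem posPart_apply_eq_zero_of_mem_orthogonal (S : H →L[ℂ] H) {w : H}
    (hw : w ∈ (LinearMap.range ((S⁺ : H →L[ℂ] H) : H →ₗ[ℂ] H))ᗮ) : S⁺ w = 0 := by
  rwa [ContinuousLinearMap.orthogonal_range,
    (IsSelfAdjoint.of_nonneg (CFC.posPart_nonneg S)).adjoint_eq] at hw

theorem IsSelfAdjoint.exists_invariant_finrank_lt_of_lambdaSA_lt {T : H →L[ℂ] H}
    (hT : IsSelfAdjoint T) {k : ℕ} (hk : 0 < k) {t : ℝ} (ht : lambdaSA k T < t) :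
    ∃ G : Submodule ℂ H, FiniteDimensional ℂ G ∧ finrank ℂ G < k ∧ (∀ x ∈ G, T x ∈ G) ∧
      ∀ w ∈ Gᗮ, (⟪w, T w⟫_ℂ).re ≤ t * ‖w‖ ^ 2 := by
  set S := T - algebraMap ℝ (H →L[ℂ] H) t
  have hS : IsSelfAdjoint S := hT.sub (.algebraMap _ (.all t))
  have hTS : ∀ x, T x = S x + (t : ℂ) • x := fun x => by
    simp [S, Algebra.algebraMap_eq_smul_one, ← Complex.coe_smul]
  have hTS_re : ∀ x, (⟪x, T x⟫_ℂ).re = (⟪x, S x⟫_ℂ).re + t * ‖x‖ ^ 2 := fun x => by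
    rw [hTS, inner_add_right, inner_smul_right, Complex.add_re, Complex.re_ofReal_mul,
      ← RCLike.re_to_complex (x := ⟪x, x⟫_ℂ), inner_self_eq_norm_sq]
  have hSpos := (ContinuousLinearMap.nonneg_iff_isPositive _).mp (CFC.posPart_nonneg S)
  have hSneg := (ContinuousLinearMap.nonneg_iff_isPositive _).mp (CFC.negPart_nonneg S)
  set G := LinearMap.range ((S⁺ : H →L[ℂ] H) : H →ₗ[ℂ] H)
  have hGt : ∀ x ∈ G, ‖x‖ = 1 → t ≤ (⟪x, T x⟫_ℂ).re := by
    rintro - ⟨y, rfl⟩ hx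
    have := hSpos.re_inner_nonneg_right (S⁺ y)
    rw [ContinuousLinearMap.coe_coe] at hx ⊢
    rw [hTS_re, hS.apply_posPart_apply y, hx]
    rw [RCLike.re_to_complex] at this
    linarith
  have hGk : Module.rank ℂ G < k := by
    by_contra! h
    obtain ⟨V, hVG, -, hV⟩ := G.exists_le_finrank_eq_s2 h
    exact ht.not_ge (le_lambdaSA hk V hV fun x hx => hGt x (hVG hx))
  have : FiniteDimensional ℂ G :=
    Module.rank_lt_aleph0_iff.mp (hGk.trans Cardinal.natCast_lt_aleph0)
  refine ⟨G, this, ?_, ?_, fun w hw => ?_⟩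
  · rw [← Module.finrank_eq_rank] at hGk
    exact_mod_cast hGk
  · rintro - ⟨y, rfl⟩
    refine ⟨S⁺ y + (t : ℂ) • y, ?_⟩
    simp [hTS, hS.apply_posPart_apply y]
  · have hSw : S w = -(S⁻ w) := by
      conv_lhs => rw [← CFC.posPart_sub_negPart S hS]
      rw [sub_apply, posPart_apply_eq_zero_of_mem_orthogonal S hw, zero_sub]
    have := hSneg.re_inner_nonneg_right w
    rw [RCLike.re_to_complex] at this
    rw [hTS_re, hSw, inner_neg_right, Complex.neg_re]
    linarith

theorem IsSelfAdjoint.exists_lambdaSA_sub_smul_starProjection_lt {T : H →L[ℂ] H}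
    (hT : IsSelfAdjoint T) {r k : ℕ} (hrk : r < k) (hk : (k : Cardinal) ≤ Module.rank ℂ H)
    {a t : ℝ} (hTa : ‖T‖ ≤ a) (ht : lambdaSA k T < t) :
    ∃ (U : Submodule ℂ H) (_ : FiniteDimensional ℂ U), finrank ℂ U = r ∧
      lambdaSA (k - r) (T - ((2 * a : ℝ) : ℂ) • U.starProjection) < t := by
  obtain ⟨t', hTt', ht't⟩ := exists_between ht
  obtain ⟨G, _, hGk, hGT, hGt'⟩ := hT.exists_invariant_finrank_lt_of_lambdaSA_lt (by omega) hTt'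
  obtain ⟨U, _, hUr, hUG⟩ :=
    G.exists_finrank_eq_and_comparable ((Nat.cast_le.mpr hrk.le).trans hk)
  have hbound : lambdaSA (k - r) (T - ((2 * a : ℝ) : ℂ) • U.starProjection) ≤ max t' (-a) := by
    refine lambdaSA_le ((Nat.cast_le.mpr (Nat.sub_le k r)).trans hk) fun V hV => ?_
    have : FiniteDimensional ℂ V := .of_finrank_pos (by omega)
    have hZ : finrank ℂ ↥(Uᗮ ⊓ G) < finrank ℂ V := by
      rw [Submodule.finrank_orthogonal_inf_eq_sub hUG]
      omega
    obtain ⟨x, ⟨hxV, hxZ⟩, hx⟩ :=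
      Submodule.exists_norm_eq_one_mem (Submodule.inf_orthogonal_ne_bot_of_finrank_lt hZ)
    exact ⟨x, hxV, hx, re_inner_sub_smul_starProjection_apply_le hT.isSymmetric hTa hGT hGt' hx
      (Submodule.starProjection_mem_of_mem_orthogonal hUG hxZ)⟩
  have hat : -a < t := by linarith [neg_norm_le_lambdaSA (by omega) hk T]
  exact ⟨U, ‹_›, hUr, hbound.trans_lt (max_lt ht't hat)⟩

theorem exists_mem_Ico_exp_mul_I_eq (θ : ℝ) :
    ∃ ξ ∈ Set.Ico 0 (2 * Real.pi), exp (ξ * I) = exp (θ * I) := by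
  refine ⟨toIcoMod Real.two_pi_pos 0 θ, toIcoMod_mem_Ico' _ θ,
    Complex.exp_eq_exp_iff_exists_int.mpr ⟨-toIcoDiv Real.two_pi_pos 0 θ, ?_⟩⟩
  rw [← self_sub_toIcoDiv_zsmul]
  push_cast
  ring

theorem exists_mem_Ico_exp_mul_I_smul_add_eq_sub {M : Type*} [AddCommGroup M] [Module ℂ M]
    (ξ : ℝ) (x y : M) (a : ℝ) :
    ∃ ξ' ∈ Set.Ico 0 (2 * Real.pi), exp (ξ * I) • (x + (2 * exp (ξ' * I) * (a : ℂ)) • y)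
      = exp (ξ * I) • x - ((2 * a : ℝ) : ℂ) • y := by
  obtain ⟨ξ', hξ', hexp⟩ := exists_mem_Ico_exp_mul_I_eq (Real.pi - ξ)
  have hphase : exp (ξ * I) * exp (ξ' * I) = -1 := by
    rw [hexp, ← Complex.exp_add, ← Complex.exp_pi_mul_I]
    push_cast
    ring_nf
  refine ⟨ξ', hξ', ?_⟩
  rw [smul_add, smul_smul, sub_eq_add_neg, ← neg_smul]
  congr 2
  push_cast
  linear_combination (2 * (a : ℂ)) * hphase

theorem omegaK_eq_iInter_perturbed_general
    (r k : ℕ) (hrk : r < k) (hk : (k : Cardinal) ≤ Module.rank ℂ H)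
    (A : H →L[ℂ] H) (S : Set (H →L[ℂ] H))
    (hSrank : ∀ F ∈ S, opRank F ≤ r)
    (hS0 : ∀ ξ ∈ Set.Ico (0 : ℝ) (2 * Real.pi), ∀ P : H →L[ℂ] H,
      IsOrthProj P → opRank P = r →
      ((2 * Complex.exp (ξ * Complex.I) * (‖A‖ : ℂ)) • P) ∈ S) :
    omegaK k A = ⋂ F ∈ S, omegaK (k - r) (A + F) := by
  ext μ
  simp only [omegaK, Set.mem_iInter, Set.mem_ofPred_eq, lambdaSA_reOp]
  refine ⟨fun hμ F hF ξ hξ => (hμ ξ hξ).trans ?_, fun hμ ξ hξ => ?_⟩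
  · rw [smul_add]
    exact lambdaSA_le_lambdaSA_add hrk hk _ ((opRank_smul_le _ F).trans (hSrank F hF))
  by_contra! hlt
  rw [← lambdaSA_reOp] at hlt
  obtain ⟨U, _, hUr, hU⟩ := (isSelfAdjoint_reOp _).exists_lambdaSA_sub_smul_starProjection_lt
    hrk hk (a := ‖A‖) ((norm_reOp_le _).trans (by simp [norm_smul])) hlt
  obtain ⟨ξ', hξ', hcF⟩ := exists_mem_Ico_exp_mul_I_smul_add_eq_sub ξ A U.starProjection ‖A‖
  have hF := hS0 ξ' hξ' _ (isOrthProj_starProjection U) (by rw [opRank_starProjection_s2, hUr])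
  refine (hμ _ hF ξ hξ).not_gt (lt_of_eq_of_lt (lambdaSA_congr fun x => ?_) hU)
  rw [hcF]
  simp only [sub_apply, inner_sub_right, Complex.sub_re, re_inner_reOp_apply]

/-- For `1 ≤ r < k ≤ dim ℋ` and any collection `𝒮` of operators of rank at most `r`
containing `𝒮₀ = {2e^{iξ}‖A‖P : P a rank-r orthogonal projection, ξ ∈ [0,2π)}`,
`Ω_k(A)` is the intersection of the sets `Ω_{k-r}(A+F)` for `F ∈ 𝒮`. -/
theorem omegaK_eq_iInter_perturbed
    (r k : ℕ) (hr : 1 ≤ r) (hrk : r < k) (hk : (k : Cardinal) ≤ Module.rank ℂ H)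
    (A : H →L[ℂ] H) (S : Set (H →L[ℂ] H))
    (hSrank : ∀ F ∈ S, opRank F ≤ r)
    (hS0 : ∀ ξ ∈ Set.Ico (0 : ℝ) (2 * Real.pi), ∀ P : H →L[ℂ] H,
      IsOrthProj P → opRank P = r →
      ((2 * Complex.exp (ξ * Complex.I) * (‖A‖ : ℂ)) • P) ∈ S) :
    omegaK k A = ⋂ F ∈ S, omegaK (k - r) (A + F) :=
  omegaK_eq_iInter_perturbed_general r k hrk hk A S hSrank hS0
end
end
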